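/- For any dissimilarity map δ on X with |X| = n ≥ 4 and leaves a ≠ b, writing Z_δ(a,b) = ∑_{{x,y}} α(x,y) δ(x,y) (scaled by C(n-1,2)) as a linear function of the values δ(x,y) over unordered pairs, the coefficient α(x,y) equals -C(n-2,2) if {x,y} = {a,b}; equals (n-3)/2 if |{x,y} ∩ {a,b}| = 1; and equals -1 if {x,y} ∩ {a,b} = ∅. -/

import Mathlib

/-!
Both sides are sums over ordered pairs of distinct points. Splitting `X = {a, b} ⊔ S` with
`|S| = n - 2`, each side is half of
`(n - 3) ∑_{y ∈ S} (δ(a,y) + δ(b,y)) - 2 C(n-2,2) δ(a,b) - ∑_{x ≠ y ∈ S} δ(x,y)`: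
on the left because every `k ∈ S` has `n - 3` partners `l ∈ S`, each contributing half of
`δ(a,k) + δ(b,k)`; on the right by reading off the coefficients, where symmetry of `δ` merges
the terms `δ(y,a)`, `δ(y,b)` with `δ(a,y)`, `δ(b,y)`.
-/

open Finset
open scoped Classical

/-- `w_δ(ij:kl) = (1/2)(δ(i,k)+δ(i,l)+δ(j,k)+δ(j,l)) - δ(i,j) - δ(k,l)`. -/
noncomputable def njw {X : Type*} (δ : X → X → ℝ) (i j k l : X) : ℝ :=
  (δ i k + δ i l + δ j k + δ j l) / 2 - δ i j - δ k l

/-- The scaled Z-criterion `Z_δ(i,j) = ∑_{{k,l} ⊆ X\{i,j}} w_δ(ij:kl)`. -/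
noncomputable def njZ {X : Type*} [Fintype X] [DecidableEq X]
    (δ : X → X → ℝ) (i j : X) : ℝ :=
  (1 / 2) * ∑ k ∈ (Finset.univ.erase i).erase j,
    ∑ l ∈ ((Finset.univ.erase i).erase j).erase k, njw δ i j k l

section OffDiagonalSums

variable {α : Type*} [DecidableEq α]

theorem sum_sum_erase_insert {M : Type*} [AddCommMonoid M] {a : α} {s : Finset α}
    (ha : a ∉ s) (f : α → α → M) :
    ∑ x ∈ insert a s, ∑ y ∈ (insert a s).erase x, f x y =
      ∑ y ∈ s, (f a y + f y a) + ∑ x ∈ s, ∑ y ∈ s.erase x, f x y := by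
  have hrow : ∀ x ∈ s, ∑ y ∈ (insert a s).erase x, f x y =
      f x a + ∑ y ∈ s.erase x, f x y := fun x hx => by
    rw [erase_insert_of_ne (ne_of_mem_of_not_mem hx ha).symm,
      sum_insert fun h => ha (mem_of_mem_erase h)]
  rw [sum_insert ha, erase_insert ha, sum_congr rfl hrow, sum_add_distrib, sum_add_distrib,
    add_assoc]

theorem sum_sum_erase_add {R : Type*} [CommRing R] (s : Finset α) (f g : α → R) :
    ∑ x ∈ s, ∑ y ∈ s.erase x, (f x + g y) =
      ((#s : R) - 1) * (∑ x ∈ s, f x + ∑ x ∈ s, g x) := by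
  have hrow : ∀ x ∈ s, ∑ y ∈ s.erase x, (f x + g y) =
      ((#s : R) - 1) * f x + (∑ y ∈ s, g y - g x) := fun x hx => by
    rw [sum_add_distrib, sum_const, nsmul_eq_mul, cast_card_erase_of_mem hx,
      sum_erase_eq_sub hx]
  rw [sum_congr rfl hrow, sum_add_distrib, sum_sub_distrib, ← mul_sum, sum_const, nsmul_eq_mul]
  ring

theorem sum_sum_erase_njw (δ : α → α → ℝ) (a b : α) (s : Finset α) :
    ∑ k ∈ s, ∑ l ∈ s.erase k, njw δ a b k l =
      ((#s : ℝ) - 1) * ∑ k ∈ s, (δ a k + δ b k) - 2 * ((#s).choose 2 : ℝ) * δ a b -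
        ∑ k ∈ s, ∑ l ∈ s.erase k, δ k l := by
  have hsplit : ∀ k l, njw δ a b k l =
      ((δ a k + δ b k) / 2 + (δ a l + δ b l) / 2) - δ a b - δ k l := fun k l => by
    rw [njw]; ring
  have hconst : ∑ k ∈ s, ∑ _l ∈ s.erase k, δ a b = ((#s : ℝ) - 1) * (#s * δ a b) := by
    simpa using sum_sum_erase_add s (fun _ => δ a b) 0
  simp only [hsplit, sum_sub_distrib, sum_sum_erase_add, hconst, ← sum_div, Nat.cast_choose_two]
  ring

end OffDiagonalSums

section ZCriterion

variable {X : Type*} [DecidableEq X]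

/-- The coefficient `α(x,y)` of `δ(x,y)` in `Z_δ(a,b)`, where `n = |X|`. -/
noncomputable def zCoeff (a b : X) (n : ℕ) (x y : X) : ℝ :=
  if (x = a ∧ y = b) ∨ (x = b ∧ y = a) then -(((n - 2).choose 2 : ℝ))
  else if x = a ∨ x = b ∨ y = a ∨ y = b then ((n : ℝ) - 3) / 2
  else -1

variable [Fintype X] {δ : X → X → ℝ} {a b : X}

theorem card_erase_erase_univ (hab : a ≠ b) :
    #((univ.erase a).erase b) = Fintype.card X - 2 := by
  rw [card_erase_of_mem (mem_erase.mpr ⟨hab.symm, mem_univ b⟩), card_erase_of_mem (mem_univ a),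
    card_univ, Nat.sub_sub]

theorem njZ_eq (hab : a ≠ b) :
    njZ δ a b = (1 / 2) *
      (((Fintype.card X : ℝ) - 3) * ∑ y ∈ (univ.erase a).erase b, (δ a y + δ b y) -
        2 * ((Fintype.card X - 2).choose 2 : ℝ) * δ a b -
        ∑ x ∈ (univ.erase a).erase b, ∑ y ∈ ((univ.erase a).erase b).erase x, δ x y) := by
  have htwo : 2 ≤ Fintype.card X := (card_pair hab).symm.trans_le (card_le_univ _)
  rw [njZ, sum_sum_erase_njw, card_erase_erase_univ hab, Nat.cast_sub htwo]
  ring_nf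

theorem sum_sum_erase_zCoeff_mul (hab : a ≠ b) (hsym : ∀ x y, δ x y = δ y x) (n : ℕ) :
    ∑ x : X, ∑ y ∈ univ.erase x, zCoeff a b n x y * δ x y =
      ((n : ℝ) - 3) * ∑ y ∈ (univ.erase a).erase b, (δ a y + δ b y) -
        2 * ((n - 2).choose 2 : ℝ) * δ a b -
        ∑ x ∈ (univ.erase a).erase b, ∑ y ∈ ((univ.erase a).erase b).erase x, δ x y := by
  set s := (univ.erase a).erase b with hs
  have hmem : ∀ {y}, y ∈ s ↔ y ≠ a ∧ y ≠ b := by simp [hs, and_comm]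
  have hbs : b ∉ s := by simp [hmem]
  have has : a ∉ insert b s := by simp [hmem, hab]
  have huniv : (univ : Finset X) = insert a (insert b s) := by
    ext y; by_cases y = a <;> by_cases y = b <;> simp_all
  have hcross : ∀ y ∈ s, zCoeff a b n a y * δ a y + zCoeff a b n y a * δ y a +
      (zCoeff a b n b y * δ b y + zCoeff a b n y b * δ y b) = ((n : ℝ) - 3) * (δ a y + δ b y) :=
    fun y hy => by
    obtain ⟨hya, hyb⟩ := hmem.mp hy
    simp only [zCoeff, hya, hyb, hab, hab.symm, and_false, and_true, and_self, or_self, or_false,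
      or_true, ↓reduceIte, hsym y a, hsym y b]
    ring
  have hinner : ∀ x ∈ s, ∑ y ∈ s.erase x, zCoeff a b n x y * δ x y = -∑ y ∈ s.erase x, δ x y :=
    fun x hx => by
    rw [← sum_neg_distrib]
    refine sum_congr rfl fun y hy => ?_
    obtain ⟨hxa, hxb⟩ := hmem.mp hx
    obtain ⟨hya, hyb⟩ := hmem.mp (mem_of_mem_erase hy)
    simp [zCoeff, hxa, hxb, hya, hyb]
  rw [huniv, sum_sum_erase_insert has, sum_sum_erase_insert hbs, sum_insert hbs, add_assoc,
    ← add_assoc (∑ y ∈ s, _), ← sum_add_distrib, sum_congr rfl hcross, sum_congr rfl hinner,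
    sum_neg_distrib, ← mul_sum, hsym b a]
  simp only [zCoeff, hab.symm, and_self, and_false, false_and, or_false, or_true, ↓reduceIte]
  ring

end ZCriterion

theorem statement_13_general {X : Type*} [Fintype X] [DecidableEq X]
    (a b : X) (hab : a ≠ b)
    (δ : X → X → ℝ)
    (hsym : ∀ x y, δ x y = δ y x) :
    njZ δ a b =
      (1 / 2) * ∑ x : X, ∑ y ∈ Finset.univ.erase x,
        (if (x = a ∧ y = b) ∨ (x = b ∧ y = a)
           then -(((Fintype.card X - 2).choose 2 : ℝ))
           else if x = a ∨ x = b ∨ y = a ∨ y = b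
             then ((Fintype.card X : ℝ) - 3) / 2
             else -1) * δ x y := by
  rw [njZ_eq hab]
  exact congrArg _ (sum_sum_erase_zCoeff_mul hab hsym _).symm

/-- the scaled Z-criterion as a linear function of the values `δ(x,y)`
over unordered pairs `{x,y}` (written as half the sum over ordered pairs): the
coefficient of `δ(x,y)` is `-C(n-2,2)` if `{x,y} = {a,b}`, `(n-3)/2` if
`|{x,y} ∩ {a,b}| = 1`, and `-1` if `{x,y} ∩ {a,b} = ∅`. -/
theorem statement_13 {X : Type*} [Fintype X] [DecidableEq X]
    (hn : 4 ≤ Fintype.card X)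
    (a b : X) (hab : a ≠ b)
    (δ : X → X → ℝ)
    (hsym : ∀ x y, δ x y = δ y x) (hdiag : ∀ x, δ x x = 0) :
    njZ δ a b =
      (1 / 2) * ∑ x : X, ∑ y ∈ Finset.univ.erase x,
        (if (x = a ∧ y = b) ∨ (x = b ∧ y = a)
           then -(((Fintype.card X - 2).choose 2 : ℝ))
           else if x = a ∨ x = b ∨ y = a ∨ y = b
             then ((Fintype.card X : ℝ) - 3) / 2
             else -1) * δ x y :=
  statement_13_general a b hab δ hsym
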